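/- arXiv:1510.01617 — 4 statements merged into one kernel-verified Lean document; each statement's English description precedes it below -/
import Mathlib

section
/- In the Baumslag-Solitar group H = ⟨x, y | y⁻¹xy = x²⟩, the centralizer of x is exactly the set of elements of the form y^n x^j y^{-n} for n ≥ 0 and j ∈ ℤ. -/
/-!
From `y⁻¹ x y = x²` one gets `x ^ m * y ^ n = y ^ n * x ^ (m * 2 ^ n)`, so every element of
BS(1,2) can be written `g = y ^ a * x ^ m * y ^ (-b)`. For such `g`,
`g⁻¹ x g = y ^ b * x ^ (2 ^ a) * y ^ (-b)`, while `x = y ^ b * x ^ (2 ^ b) * y ^ (-b)`; so `g`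
commutes with `x` iff `x ^ (2 ^ a) = x ^ (2 ^ b)`. Since `x` has infinite order (it acts on `ℚ`
as a translation), this happens iff `a = b`.
-/

/-- Relator for the Baumslag-Solitar group BS(1,2) = ⟨x, y | y⁻¹xy = x²⟩,
with `false ↦ x`, `true ↦ y`. -/
def bsRels : Set (FreeGroup Bool) :=
  {(FreeGroup.of true)⁻¹ * FreeGroup.of false * FreeGroup.of true *
    (FreeGroup.of false * FreeGroup.of false)⁻¹}

/-- The Baumslag-Solitar group BS(1,2). -/
abbrev BS := PresentedGroup bsRels

/-- The generator x of BS(1,2). -/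
def bsx : BS := PresentedGroup.of false

/-- The generator y of BS(1,2). -/
def bsy : BS := PresentedGroup.of true

section ConjEqSq

variable {G : Type*} [Group G] {x y : G}

theorem inv_pow_mul_zpow_mul_pow_of_conj_eq_sq (h : y⁻¹ * x * y = x ^ 2) (n : ℕ) (m : ℤ) :
    (y ^ n)⁻¹ * x ^ m * y ^ n = x ^ (m * 2 ^ n) := by
  induction n generalizing m with
  | zero => simp
  | succ n ih =>
    have hy : y⁻¹ * x ^ m * y = x ^ (2 * m) := by
      have := conj_zpow (a := y⁻¹) (b := x) (i := m)
      rw [inv_inv] at this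
      rw [← this, h, ← zpow_natCast, ← zpow_mul]
      rfl
    calc (y ^ (n + 1))⁻¹ * x ^ m * y ^ (n + 1) = (y ^ n)⁻¹ * (y⁻¹ * x ^ m * y) * y ^ n := by
          group
      _ = x ^ (m * 2 ^ (n + 1)) := by rw [hy, ih]; ring_nf

theorem zpow_mul_pow_of_conj_eq_sq (h : y⁻¹ * x * y = x ^ 2) (n : ℕ) (m : ℤ) :
    x ^ m * y ^ n = y ^ n * x ^ (m * 2 ^ n) := by
  rw [← inv_pow_mul_zpow_mul_pow_of_conj_eq_sq h]
  group

theorem inv_mul_zpow_of_conj_eq_sq (h : y⁻¹ * x * y = x ^ 2) (m : ℤ) :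
    y⁻¹ * x ^ m = x ^ (m * 2) * y⁻¹ := by
  rw [← pow_one y, ← pow_one (2 : ℤ), ← inv_pow_mul_zpow_mul_pow_of_conj_eq_sq h]
  group

theorem commute_pow_mul_zpow_mul_pow_inv_iff (h : y⁻¹ * x * y = x ^ 2) (hx : ¬IsOfFinOrder x)
    (a b : ℕ) (m : ℤ) : Commute x (y ^ a * x ^ m * (y ^ b)⁻¹) ↔ a = b := by
  set g := y ^ a * x ^ m * (y ^ b)⁻¹ with hg_def
  have hconj (n : ℕ) : (y ^ n)⁻¹ * x * y ^ n = x ^ (2 ^ n : ℤ) := by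
    simpa using inv_pow_mul_zpow_mul_pow_of_conj_eq_sq h n 1
  have hg : g⁻¹ * (x * g) = y ^ b * x ^ (2 ^ a : ℤ) * (y ^ b)⁻¹ :=
    calc g⁻¹ * (x * g) = y ^ b * x ^ (-m) * ((y ^ a)⁻¹ * x * y ^ a) * x ^ m * (y ^ b)⁻¹ := by
          rw [hg_def]; group
      _ = _ := by rw [hconj]; group
  have hx' : x = y ^ b * x ^ (2 ^ b : ℤ) * (y ^ b)⁻¹ := by rw [← hconj]; group
  calc Commute x g ↔ g⁻¹ * (x * g) = x := inv_mul_eq_iff_eq_mul.symm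
    _ ↔ y ^ b * x ^ (2 ^ a : ℤ) * (y ^ b)⁻¹ = y ^ b * x ^ (2 ^ b : ℤ) * (y ^ b)⁻¹ := by
      rw [hg, ← hx']
    _ ↔ a = b := by
      rw [mul_left_inj, mul_right_inj, (injective_zpow_iff_not_isOfFinOrder.2 hx).eq_iff,
        pow_right_inj₀ (by norm_num) (by norm_num)]

theorem exists_eq_pow_mul_zpow_mul_pow_inv (h : y⁻¹ * x * y = x ^ 2)
    (hgen : Subgroup.closure {x, y} = ⊤) (g : G) :
    ∃ (a b : ℕ) (m : ℤ), g = y ^ a * x ^ m * (y ^ b)⁻¹ := by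
  have hx_mul (e : ℤ) (a b : ℕ) (m : ℤ) :
      x ^ e * (y ^ a * x ^ m * (y ^ b)⁻¹) = y ^ a * x ^ (e * 2 ^ a + m) * (y ^ b)⁻¹ :=
    calc _ = x ^ e * y ^ a * x ^ m * (y ^ b)⁻¹ := by group
      _ = _ := by rw [zpow_mul_pow_of_conj_eq_sq h]; group
  induction hgen.ge (Subgroup.mem_top g) using Subgroup.closure_induction_left with
  | one => exact ⟨0, 0, 0, by simp⟩
  | mul_left s hs _ _ ih =>
    obtain ⟨a, b, m, rfl⟩ := ih
    rcases hs with hs | hs <;> rw [hs]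
    · exact ⟨a, b, 1 * 2 ^ a + m, by rw [← hx_mul, zpow_one]⟩
    · exact ⟨a + 1, b, m, by group⟩
  | inv_mul_cancel s hs _ _ ih =>
    obtain ⟨a, b, m, rfl⟩ := ih
    rcases hs with hs | hs <;> rw [hs]
    · exact ⟨a, b, -1 * 2 ^ a + m, by rw [← hx_mul, zpow_neg_one]⟩
    · cases a with
      | zero =>
        refine ⟨0, b + 1, m * 2, ?_⟩
        calc _ = y⁻¹ * x ^ m * (y ^ b)⁻¹ := by group
          _ = _ := by rw [inv_mul_zpow_of_conj_eq_sq h]; group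
      | succ a => exact ⟨a, b, m, by group⟩

end ConjEqSq

theorem bsy_inv_mul_bsx_mul_bsy : bsy⁻¹ * bsx * bsy = bsx ^ 2 :=
  sq bsx ▸ PresentedGroup.mk_eq_mk_of_mul_inv_mem rfl

def bsAffine : BS →* Equiv.Perm ℚ :=
  PresentedGroup.toGroup (f := fun b => cond b (Equiv.mulRight₀ (2⁻¹ : ℚ) (by norm_num))
    (Equiv.addRight 1)) <| by
    rintro r rfl
    ext t
    simp only [mul_inv_rev, map_mul, map_inv, FreeGroup.lift_apply_of, cond_true, cond_false,
      Equiv.neg_addRight, Equiv.Perm.mul_apply, Equiv.coe_addRight, Equiv.mulRight₀_apply,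
      Equiv.Perm.coe_inv, Equiv.mulRight₀_symm_apply, inv_inv, Equiv.Perm.coe_one, id_eq]
    ring

theorem not_isOfFinOrder_bsx : ¬IsOfFinOrder bsx := by
  refine injective_zpow_iff_not_isOfFinOrder.1 fun m k hmk => ?_
  simpa [bsAffine, bsx] using congrArg (fun g => bsAffine g 0) hmk

theorem closure_bsx_bsy : Subgroup.closure {bsx, bsy} = ⊤ := by
  rw [← PresentedGroup.closure_range_of, Bool.range_eq]
  rfl

/-- In BS(1,2), the centralizer of x is exactly
{ y^n x^j y^{-n} : n ∈ ℕ, j ∈ ℤ }. -/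
theorem bs_centralizer_of_x (g : BS) :
    g ∈ Subgroup.centralizer {bsx} ↔
      ∃ (n : ℕ) (j : ℤ), g = bsy ^ n * bsx ^ j * (bsy ^ n)⁻¹ := by
  have key := commute_pow_mul_zpow_mul_pow_inv_iff bsy_inv_mul_bsx_mul_bsy not_isOfFinOrder_bsx
  rw [Subgroup.mem_centralizer_singleton_iff]
  constructor
  · obtain ⟨a, b, m, rfl⟩ :=
      exists_eq_pow_mul_zpow_mul_pow_inv bsy_inv_mul_bsx_mul_bsy closure_bsx_bsy g
    intro hg
    obtain rfl := (key a b m).1 hg.symm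
    exact ⟨a, m, rfl⟩
  · rintro ⟨n, j, rfl⟩
    exact ((key n n j).2 rfl).symm
end

section
/- In the Baumslag-Solitar group H = ⟨x, y | y⁻¹xy = x²⟩, the centralizer of x is isomorphic to the additive group of dyadic rationals, via the map sending y^n x^j y^{-n} to j/2^n. -/
/-!
Sending `x` to `t ↦ t + 1` and `y` to `t ↦ t / 2` defines a homomorphism from BS(1,2) to the
affine group of `ℚ`. Since `y x^(2j) y⁻¹ = x^j`, every element has a normal form `y^n x^j y^(-m)`,
whose image is `t ↦ 2^(m-n) t + j / 2^n`; reading this off shows the homomorphism is injective.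
An element commutes with `x` exactly when its image commutes with `t ↦ t + 1`, i.e. is a
translation, so the centralizer of `x` is carried isomorphically onto the dyadic translations.
-/

/-- `⟨b, a⟩` is the affine map `t ↦ a * t + b` of `R`; multiplication is composition. -/
@[ext] structure Aff (R : Type*) [Ring R] where
  b : R
  a : Rˣ

namespace Aff

variable {R : Type*} [Ring R]

instance : Mul (Aff R) := ⟨fun g h => ⟨g.b + g.a * h.b, g.a * h.a⟩⟩
instance : One (Aff R) := ⟨⟨0, 1⟩⟩
instance : Inv (Aff R) := ⟨fun g => ⟨-(↑g.a⁻¹ * g.b), g.a⁻¹⟩⟩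

@[simp] lemma mul_b (g h : Aff R) : (g * h).b = g.b + g.a * h.b := rfl
@[simp] lemma mul_a (g h : Aff R) : (g * h).a = g.a * h.a := rfl
@[simp] lemma one_b : (1 : Aff R).b = 0 := rfl
@[simp] lemma one_a : (1 : Aff R).a = 1 := rfl
@[simp] lemma inv_b (g : Aff R) : g⁻¹.b = -(↑g.a⁻¹ * g.b) := rfl
@[simp] lemma inv_a (g : Aff R) : g⁻¹.a = g.a⁻¹ := rfl

instance : Group (Aff R) where
  mul_assoc g h k := by ext <;> simp [mul_add, add_assoc, mul_assoc]
  one_mul g := by ext <;> simp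
  mul_one g := by ext <;> simp
  inv_mul_cancel g := by ext <;> simp

def translation : Multiplicative R →* Aff R where
  toFun b := ⟨b.toAdd, 1⟩
  map_one' := rfl
  map_mul' b c := by ext <;> simp

def dilation : Rˣ →* Aff R where
  toFun a := ⟨0, a⟩
  map_one' := rfl
  map_mul' a c := by ext <;> simp

@[simp] lemma translation_b (b : Multiplicative R) : (translation b).b = b.toAdd := rfl
@[simp] lemma translation_a (b : Multiplicative R) : (translation b).a = 1 := rfl
@[simp] lemma dilation_b (a : Rˣ) : (dilation a).b = 0 := rfl
@[simp] lemma dilation_a (a : Rˣ) : (dilation a : Aff R).a = a := rfl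

lemma a_eq_one_of_commute_translation_one {g : Aff R}
    (h : Commute (translation (.ofAdd 1)) g) : g.a = 1 := by
  have := congrArg b h.eq
  simp only [mul_b, translation_b, toAdd_ofAdd, translation_a, Units.val_one, one_mul,
    mul_one] at this
  exact Units.ext (add_left_cancel (this.symm.trans (add_comm _ _)))

end Aff

namespace BaumslagSolitar

lemma bsx_mul_bsy : bsx * bsy = bsy * bsx ^ 2 := by
  have h : bsy⁻¹ * bsx * bsy = bsx * bsx := by
    simpa [bsx, bsy, PresentedGroup.of] using
      PresentedGroup.mk_eq_mk_of_mul_inv_mem (rels := bsRels) rfl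
  rw [pow_two, ← h]
  group

lemma bsy_mul_zpow_mul_inv (j : ℤ) : bsy * bsx ^ (2 * j) * bsy⁻¹ = bsx ^ j := by
  rw [mul_inv_eq_iff_eq_mul, zpow_mul, zpow_ofNat]
  exact SemiconjBy.zpow_right bsx_mul_bsy.symm j

def normalForm (n m : ℕ) (j : ℤ) : BS := bsy ^ n * bsx ^ j * (bsy ^ m)⁻¹

lemma normalForm_eq_normalForm_add (n m d : ℕ) (j : ℤ) :
    normalForm n m j = normalForm (n + d) (m + d) (2 ^ d * j) := by
  induction d generalizing j with
  | zero => simp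
  | succ d ih =>
    rw [ih, normalForm, normalForm, ← bsy_mul_zpow_mul_inv,
      show 2 * (2 ^ d * j) = 2 ^ (d + 1) * j by ring, ← add_assoc, ← add_assoc, pow_succ, pow_succ]
    group

lemma normalForm_mul_normalForm (n m p q : ℕ) (j k : ℤ) :
    normalForm n m j * normalForm p q k = normalForm (n + p) (q + m) (2 ^ p * j + 2 ^ m * k) := by
  rw [normalForm_eq_normalForm_add n m p, normalForm_eq_normalForm_add p q m, normalForm,
    normalForm, normalForm, add_comm m p, zpow_add]
  group

lemma normalForm_inv (n m : ℕ) (j : ℤ) : (normalForm n m j)⁻¹ = normalForm m n (-j) := by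
  simp only [normalForm]; group

lemma exists_eq_normalForm (g : BS) : ∃ n m j, g = normalForm n m j := by
  have hg : g ∈ Subgroup.closure (Set.range (PresentedGroup.of : Bool → BS)) :=
    PresentedGroup.closure_range_of bsRels ▸ Subgroup.mem_top g
  induction hg using Subgroup.closure_induction with
  | mem _ h =>
    obtain ⟨_ | _, rfl⟩ := h
    · exact ⟨0, 0, 1, by simp [normalForm, bsx]⟩
    · exact ⟨1, 0, 0, by simp [normalForm, bsy]⟩
  | one => exact ⟨0, 0, 0, by simp [normalForm]⟩
  | mul _ _ _ _ hg hh =>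
    obtain ⟨n, m, j, rfl⟩ := hg
    obtain ⟨p, q, k, rfl⟩ := hh
    exact ⟨_, _, _, normalForm_mul_normalForm n m p q j k⟩
  | inv _ _ hg =>
    obtain ⟨n, m, j, rfl⟩ := hg
    exact ⟨_, _, _, normalForm_inv n m j⟩

def toAff : BS →* Aff ℚ :=
  PresentedGroup.toGroup (f := fun b => bif b then Aff.dilation (Units.mk0 2 two_ne_zero)⁻¹
    else Aff.translation (.ofAdd 1)) <| by
  rintro r rfl
  ext <;> norm_num

lemma toAff_bsx : toAff bsx = Aff.translation (.ofAdd 1) := PresentedGroup.toGroup.of _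
lemma toAff_bsy : toAff bsy = Aff.dilation (Units.mk0 2 two_ne_zero)⁻¹ :=
  PresentedGroup.toGroup.of _

lemma toAff_normalForm (n m : ℕ) (j : ℤ) :
    toAff (normalForm n m j) = ⟨j / 2 ^ n, Units.mk0 2 two_ne_zero ^ ((m : ℤ) - n)⟩ := by
  rw [normalForm, map_mul, map_mul, map_inv, map_pow, map_zpow, map_pow, toAff_bsx, toAff_bsy,
    ← map_pow, ← map_zpow, ← map_pow, ← map_inv]
  ext
  · simp [-map_pow, -map_zpow, -map_inv, inv_mul_eq_div]
  · simp [-map_pow, -map_zpow, -map_inv, zpow_sub₀, div_eq_inv_mul]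

lemma toAff_injective : Function.Injective toAff := by
  refine (injective_iff_map_eq_one _).mpr fun g hg => ?_
  obtain ⟨n, m, j, rfl⟩ := exists_eq_normalForm g
  rw [toAff_normalForm] at hg
  have hj : (j : ℚ) / 2 ^ n = 0 := congrArg Aff.b hg
  have hmn : (2 : ℚ) ^ ((m : ℤ) - n) = 1 := by simpa using congrArg (fun g => (g.a : ℚ)) hg
  rw [zpow_eq_one_iff_right₀ zero_le_two one_lt_two.ne', sub_eq_zero, Nat.cast_inj] at hmn
  simp_all [normalForm]

lemma toAff_a_eq_one_of_mem_centralizer {g : BS} (hg : g ∈ Subgroup.centralizer {bsx}) :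
    (toAff g).a = 1 := by
  refine Aff.a_eq_one_of_commute_translation_one ?_
  rw [← toAff_bsx, Commute, SemiconjBy, ← map_mul, ← map_mul,
    Subgroup.mem_centralizer_singleton_iff.mp hg]

lemma normalForm_mem_centralizer (n : ℕ) (j : ℤ) :
    normalForm n n j ∈ Subgroup.centralizer {bsx} := by
  refine Subgroup.mem_centralizer_singleton_iff.mpr (toAff_injective ?_)
  ext <;> simp [toAff_normalForm, toAff_bsx, add_comm]

section

variable {D : AddSubgroup ℚ} (hD : ∀ (j : ℤ) (n : ℕ), (j : ℚ) / 2 ^ n ∈ D)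

def centralizerToDyadic : Subgroup.centralizer {bsx} →* Multiplicative D where
  toFun g := .ofAdd ⟨(toAff g).b, by
    obtain ⟨n, m, j, hg⟩ := exists_eq_normalForm g
    simpa [hg, toAff_normalForm] using hD j n⟩
  map_one' := rfl
  map_mul' g h := by
    simp [← ofAdd_add, toAff_a_eq_one_of_mem_centralizer g.2]

lemma centralizerToDyadic_apply (g : Subgroup.centralizer {bsx}) :
    ((centralizerToDyadic hD g).toAdd : ℚ) = (toAff g).b :=
  rfl

lemma centralizerToDyadic_normalForm (n : ℕ) (j : ℤ)
    (h : normalForm n n j ∈ Subgroup.centralizer {bsx}) :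
    ((centralizerToDyadic hD ⟨normalForm n n j, h⟩).toAdd : ℚ) = j / 2 ^ n := by
  rw [centralizerToDyadic_apply, toAff_normalForm]

lemma centralizerToDyadic_injective : Function.Injective (centralizerToDyadic hD) := by
  refine (injective_iff_map_eq_one _).mpr fun g hg => Subtype.ext (toAff_injective ?_)
  ext
  · rw [← centralizerToDyadic_apply hD, hg]
    rfl
  · simp [toAff_a_eq_one_of_mem_centralizer g.2]

lemma centralizerToDyadic_surjective (hD' : ∀ q ∈ D, ∃ (j : ℤ) (n : ℕ), q = j / 2 ^ n) :
    Function.Surjective (centralizerToDyadic hD) := by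
  intro d
  obtain ⟨j, n, hd⟩ := hD' _ d.toAdd.2
  refine ⟨⟨normalForm n n j, normalForm_mem_centralizer n j⟩, ?_⟩
  apply Multiplicative.toAdd.injective
  exact Subtype.ext ((centralizerToDyadic_normalForm hD n j _).trans hd.symm)

end

end BaumslagSolitar

open BaumslagSolitar in
/-- The centralizer of x in BS(1,2) is isomorphic to the additive group of
dyadic rationals, via y^n x^j y^{-n} ↦ j/2^n. -/
theorem bs_centralizer_iso_dyadic
    (D : AddSubgroup ℚ)
    (hD : ∀ q : ℚ, q ∈ D ↔ ∃ (j : ℤ) (n : ℕ), q = (j : ℚ) / 2 ^ n) :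
    ∃ e : Subgroup.centralizer {bsx} ≃* Multiplicative D,
      ∀ (n : ℕ) (j : ℤ) (h : bsy ^ n * bsx ^ j * (bsy ^ n)⁻¹ ∈ Subgroup.centralizer {bsx}),
        ((Multiplicative.toAdd (e ⟨bsy ^ n * bsx ^ j * (bsy ^ n)⁻¹, h⟩) : D) : ℚ)
          = (j : ℚ) / 2 ^ n := by
  have hdyadic : ∀ (j : ℤ) (n : ℕ), (j : ℚ) / 2 ^ n ∈ D := fun j n => (hD _).mpr ⟨j, n, rfl⟩
  exact ⟨.ofBijective (centralizerToDyadic hdyadic) ⟨centralizerToDyadic_injective hdyadic,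
      centralizerToDyadic_surjective hdyadic fun q => (hD q).mp⟩,
    centralizerToDyadic_normalForm hdyadic⟩
end

section
/- In the Baumslag-Gersten group G = ⟨x, y, t | y⁻¹xy = x², t⁻¹xt = y⟩, for each g in the centralizer of x in the Baumslag-Solitar subgroup, the endomorphism defined by x ↦ x, y ↦ y, t ↦ gt is a group automorphism of G, with inverse given by x ↦ x, y ↦ y, t ↦ g⁻¹t. -/
/-- Relators for the Baumslag-Gersten group G = ⟨x, y, t | y⁻¹xy = x², t⁻¹xt = y⟩,
with `0 ↦ x`, `1 ↦ y`, `2 ↦ t`. -/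
def bgRels : Set (FreeGroup (Fin 3)) :=
  {(FreeGroup.of 1)⁻¹ * FreeGroup.of 0 * FreeGroup.of 1 *
      (FreeGroup.of 0 * FreeGroup.of 0)⁻¹,
   (FreeGroup.of 2)⁻¹ * FreeGroup.of 0 * FreeGroup.of 2 * (FreeGroup.of 1)⁻¹}

/-- The Baumslag-Gersten group. -/
abbrev BG := PresentedGroup bgRels

/-- The generator x of the Baumslag-Gersten group. -/
def gx : BG := PresentedGroup.of 0

/-- The generator y of the Baumslag-Gersten group. -/
def gy : BG := PresentedGroup.of 1

/-- The generator t of the Baumslag-Gersten group. -/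
def gt : BG := PresentedGroup.of 2

/-! Since g commutes with x, the assignment t ↦ g t still satisfies t⁻¹ x t = y, so it defines an
endomorphism `twist g` fixing the Baumslag-Solitar subgroup ⟨x, y⟩ pointwise. For g in that
subgroup, `twist h ∘ twist g = twist (g h)`, so `twist g⁻¹` inverts `twist g`. -/

lemma gy_inv_mul_gx_mul_gy : gy⁻¹ * gx * gy = gx * gx := by
  have h := PresentedGroup.one_of_mem (rels := bgRels) (Or.inl rfl)
  simp only [map_mul, map_inv] at h
  exact mul_inv_eq_one.mp h

lemma gt_inv_mul_gx_mul_gt : gt⁻¹ * gx * gt = gy := by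
  have h := PresentedGroup.one_of_mem (rels := bgRels) (Or.inr rfl)
  simp only [map_mul, map_inv] at h
  exact mul_inv_eq_one.mp h

lemma bg_hom_ext {G : Type*} [Group G] {φ ψ : BG →* G} (hx : φ gx = ψ gx) (hy : φ gy = ψ gy)
    (ht : φ gt = ψ gt) : φ = ψ :=
  PresentedGroup.ext fun i => by fin_cases i <;> assumption

lemma conj_mul_gt_gx {h : BG} (hh : Commute h gx) : (h * gt)⁻¹ * gx * (h * gt) = gy := by
  calc (h * gt)⁻¹ * gx * (h * gt) = gt⁻¹ * (h⁻¹ * gx * h) * gt := by group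
    _ = gy := by rw [hh.inv_mul_cancel, gt_inv_mul_gx_mul_gt]

def twist (h : BG) (hh : Commute h gx) : BG →* BG :=
  PresentedGroup.toGroup (f := ![gx, gy, h * gt]) <| by
    rintro r (rfl | rfl) <;>
      simp only [map_mul, map_inv, FreeGroup.lift_apply_of, Matrix.cons_val_zero,
        Matrix.cons_val_one, Matrix.cons_val_two, Matrix.head_cons, Matrix.tail_cons,
        mul_inv_eq_one]
    · exact gy_inv_mul_gx_mul_gy
    · exact conj_mul_gt_gx hh

section twist

variable {h : BG} (hh : Commute h gx)

@[simp] lemma twist_gx : twist h hh gx = gx := PresentedGroup.toGroup.of _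

@[simp] lemma twist_gy : twist h hh gy = gy := PresentedGroup.toGroup.of _

@[simp] lemma twist_gt : twist h hh gt = h * gt := PresentedGroup.toGroup.of _

lemma twist_apply_of_mem_closure {z : BG} (hz : z ∈ Subgroup.closure {gx, gy}) :
    twist h hh z = z := by
  induction hz using Subgroup.closure_induction with
  | mem w hw => rcases hw with rfl | rfl <;> simp
  | one => exact map_one _
  | mul a b _ _ ha hb => rw [map_mul, ha, hb]
  | inv a _ ha => rw [map_inv, ha]

lemma twist_comp_twist {k : BG} (hk : Commute k gx) (hk_mem : k ∈ Subgroup.closure {gx, gy}) :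
    (twist h hh).comp (twist k hk) = twist (k * h) (hk.mul_left hh) :=
  bg_hom_ext (by simp) (by simp) <| by
    simp [twist_apply_of_mem_closure hh hk_mem, mul_assoc]

lemma twist_of_eq_one (h1 : h = 1) : twist h hh = MonoidHom.id BG :=
  bg_hom_ext (by simp) (by simp) (by simp [h1])

end twist

/-- In the Baumslag-Gersten group, for g in the centralizer of x inside the
Baumslag-Solitar subgroup ⟨x, y⟩, the endomorphism x ↦ x, y ↦ y, t ↦ gt is an
automorphism, with inverse x ↦ x, y ↦ y, t ↦ g⁻¹t. -/
theorem bg_endo_is_automorphism (g : BG)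
    (hg : g ∈ Subgroup.closure {gx, gy}) (hgx : g * gx = gx * g) :
    ∃ F F' : BG →* BG,
      F gx = gx ∧ F gy = gy ∧ F gt = g * gt ∧
      F' gx = gx ∧ F' gy = gy ∧ F' gt = g⁻¹ * gt ∧
      F'.comp F = MonoidHom.id BG ∧ F.comp F' = MonoidHom.id BG := by
  have hgx : Commute g gx := hgx
  refine ⟨twist g hgx, twist g⁻¹ hgx.inv_left, twist_gx _, twist_gy _, twist_gt _,
    twist_gx _, twist_gy _, twist_gt _, ?_, ?_⟩
  · rw [twist_comp_twist _ _ hg]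
    exact twist_of_eq_one _ (mul_inv_cancel g)
  · rw [twist_comp_twist _ _ (inv_mem hg)]
    exact twist_of_eq_one _ (inv_mul_cancel g)
end

section
/- In the Baumslag-Gersten group G = ⟨x, y, t | y⁻¹xy = x², t⁻¹xt = y⟩, the centralizer of the subgroup generated by x and y is trivial. -/
/-!
`BG` is an HNN extension of `BS(1,2) = ⟨x, t | t⁻¹xt = x²⟩` (itself an HNN extension of `ℤ = ⟨x⟩`)
whose stable letter conjugates `x` to `t`, with associated subgroups `⟨t⟩` and `⟨x⟩`; here `t`
plays the role of `y`. By Britton's lemma, an element of an HNN extension that commutes with two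
base elements `a` and `b` lies in the base group, provided no conjugate of `a` lies in the first
associated subgroup and no conjugate of `b` in the second. The `t`-exponent sum shows that this
applies to `a = x` and `b = t`, so an element centralizing `⟨x, y⟩` lies in the center of
`BS(1,2)`. That center is trivial: writing an element as `tᵃ xᵐ t⁻ᵇ`, commuting with `x` forces `a = b`, and then
commuting with `t` forces `m = 0`.
-/

open HNNExtension Multiplicative

theorem semiconjBy_iff_inv_mul_mul_mul_inv_eq_one {G : Type*} [Group G] {a b c : G} :
    SemiconjBy a c b ↔ a⁻¹ * b * a * c⁻¹ = 1 := by
  rw [mul_inv_eq_one, mul_assoc, inv_mul_eq_iff_eq_mul, SemiconjBy, eq_comm]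

namespace HNNExtension

variable {G : Type*} [Group G] {A B : Subgroup G} {φ : A ≃* B}

open NormalWord

theorem exists_reducedWord_prod_eq (g : HNNExtension G A B φ) :
    ∃ w : ReducedWord G A B, w.prod φ = g := by
  obtain ⟨d⟩ := TransversalPair.nonempty G A B
  exact ⟨(NormalWord.equiv φ d g).toReducedWord, (NormalWord.equiv φ d).symm_apply_apply g⟩

namespace NormalWord.ReducedWord

theorem exists_prod_mul_of_eq (w : ReducedWord G A B) (hw : w.toList ≠ []) (z : G) :
    ∃ w' : ReducedWord G A B, w'.prod φ = w.prod φ * of z ∧ w'.head = w.head ∧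
      w'.toList.map Prod.fst = w.toList.map Prod.fst := by
  obtain ⟨l, p, hl⟩ := w.toList.eq_nil_or_concat'.resolve_left hw
  have hchain := w.chain
  rw [hl, List.isChain_append] at hchain
  -- `z` is absorbed into the last letter, whose group element reducedness never inspects.
  refine ⟨⟨w.head, l ++ [(p.1, p.2 * z)], List.isChain_append.2
    ⟨hchain.1, List.isChain_singleton _, fun a ha b hb => ?_⟩⟩, ?_, rfl, by simp [hl]⟩
  · simp only [List.head?_cons, Option.mem_def, Option.some.injEq] at hb
    exact hb ▸ hchain.2.2 a ha p rfl
  · simp [ReducedWord.prod, hl, mul_assoc]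

theorem head_inv_mul_mul_head_mem_toSubgroup (w : ReducedWord G A B) {u : ℤˣ}
    (hu : u ∈ w.toList.head?.map Prod.fst) {z z' : G}
    (h : w.prod φ * of z = of z' * w.prod φ) :
    w.head⁻¹ * z' * w.head ∈ toSubgroup A B (-u) := by
  obtain ⟨w', hprod, hhead, hfst⟩ :=
    w.exists_prod_mul_of_eq (by rintro hw; simp [hw] at hu) z
  have key := HNNExtension.ReducedWord.map_fst_eq_and_of_prod_eq φ (w₁ := w')
    (w₂ := ⟨z' * w.head, w.toList, w.chain⟩) (by rw [hprod, h]; simp [ReducedWord.prod, mul_assoc])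
  simpa [hhead, mul_assoc] using key.2 u (by rwa [← List.head?_map, hfst, List.head?_map])

end NormalWord.ReducedWord

theorem mem_range_of_commute_of_commute {a b : G} (ha : ∀ c : G, c⁻¹ * a * c ∉ A)
    (hb : ∀ c : G, c⁻¹ * b * c ∉ B) {g : HNNExtension G A B φ}
    (hga : Commute g (of a)) (hgb : Commute g (of b)) : g ∈ (of : G →* _).range := by
  obtain ⟨w, rfl⟩ := exists_reducedWord_prod_eq g
  rcases hw : w.toList with _ | ⟨⟨u, _⟩, _⟩
  · exact ⟨w.head, by simp [ReducedWord.prod, hw]⟩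
  have hu : u ∈ w.toList.head?.map Prod.fst := by simp [hw]
  rcases Int.units_eq_one_or u with rfl | rfl
  · exact absurd (w.head_inv_mul_mul_head_mem_toSubgroup hu hgb.eq) (hb _)
  · exact absurd (w.head_inv_mul_mul_head_mem_toSubgroup hu hga.eq) (ha _)

end HNNExtension

lemma gy_semiconjBy : SemiconjBy gy (gx * gx) gx :=
  semiconjBy_iff_inv_mul_mul_mul_inv_eq_one.2 (PresentedGroup.one_of_mem (Set.mem_insert _ _))

lemma gt_semiconjBy : SemiconjBy gt gy gx :=
  semiconjBy_iff_inv_mul_mul_mul_inv_eq_one.2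
    (PresentedGroup.one_of_mem (Set.mem_insert_of_mem _ rfl))

namespace BS12

def doubling : Multiplicative ℤ →* Multiplicative ℤ := powMonoidHom 2

lemma doubling_ofAdd (n : ℤ) : doubling (ofAdd n) = ofAdd (2 * n) := by
  simp [doubling, ← ofAdd_nsmul]

lemma doubling_injective : Function.Injective doubling :=
  pow_left_injective two_ne_zero

noncomputable def halving : doubling.range ≃* (⊤ : Subgroup (Multiplicative ℤ)) :=
  (MonoidHom.ofInjective doubling_injective).symm.trans Subgroup.topEquiv.symm

lemma halving_symm_apply (b : (⊤ : Subgroup (Multiplicative ℤ))) :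
    (halving.symm b : Multiplicative ℤ) = doubling b := rfl

lemma doubling_halving (a : doubling.range) : doubling (halving a) = a :=
  congrArg Subtype.val ((MonoidHom.ofInjective doubling_injective).apply_symm_apply a)

end BS12

abbrev BS12 := HNNExtension (Multiplicative ℤ) BS12.doubling.range ⊤ BS12.halving

namespace BS12

noncomputable def x : BS12 := of (ofAdd 1)

lemma of_ofAdd (n : ℤ) : (of (ofAdd n) : BS12) = x ^ n := by
  rw [x, ← map_zpow, ← ofAdd_zsmul, smul_eq_mul, mul_one]

lemma zpow_x_injective : Function.Injective (x ^ · : ℤ → BS12) := by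
  intro m n h
  exact ofAdd.injective (of_injective halving (by rwa [of_ofAdd, of_ofAdd]))

lemma x_zpow_mul_t (n : ℤ) : x ^ n * t = t * x ^ (2 * n) := by
  simpa only [halving_symm_apply, doubling_ofAdd, of_ofAdd] using
    of_mul_t (φ := halving) ⟨ofAdd n, trivial⟩

lemma t_semiconjBy : SemiconjBy (t : BS12) (x * x) x := by
  simpa [SemiconjBy, ← zpow_two] using (x_zpow_mul_t 1).symm

lemma x_zpow_mul_t_pow (n : ℤ) (a : ℕ) : x ^ n * t ^ a = t ^ a * x ^ (2 ^ a * n) := by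
  induction a generalizing n with
  | zero => simp
  | succ a ih =>
    rw [pow_succ, ← mul_assoc, ih, mul_assoc, x_zpow_mul_t, pow_succ, mul_comm _ (2 : ℤ)]
    simp only [mul_assoc]

lemma inv_t_pow_mul_x_zpow (n : ℤ) (a : ℕ) :
    (t ^ a)⁻¹ * x ^ n = x ^ (2 ^ a * n) * (t ^ a)⁻¹ := by
  rw [inv_mul_eq_iff_eq_mul, ← mul_assoc, ← x_zpow_mul_t_pow, mul_inv_cancel_right]

lemma exists_eq_t_pow_mul_x_zpow_mul_inv (g : BS12) :
    ∃ a b : ℕ, ∃ m : ℤ, g = t ^ a * x ^ m * (t ^ b)⁻¹ := by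
  let P : BS12 → Prop := fun g ↦ ∃ a b : ℕ, ∃ m : ℤ, g = t ^ a * x ^ m * (t ^ b)⁻¹
  have x_zpow_mul (n : ℤ) {k : BS12} : P k → P (x ^ n * k) := by
    rintro ⟨a, b, m, rfl⟩
    refine ⟨a, b, 2 ^ a * n + m, ?_⟩
    rw [zpow_add, ← mul_assoc, ← mul_assoc, x_zpow_mul_t_pow]
    simp only [mul_assoc]
  have t_mul {k : BS12} : P k → P (t * k) := by
    rintro ⟨a, b, m, rfl⟩
    exact ⟨a + 1, b, m, by rw [pow_succ', mul_assoc, mul_assoc, mul_assoc]⟩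
  have inv_t_mul {k : BS12} : P k → P (t⁻¹ * k) := by
    rintro ⟨_ | a, b, m, rfl⟩
    · have h := inv_t_pow_mul_x_zpow m 1
      simp only [pow_one] at h
      exact ⟨0, b + 1, 2 * m, by
        rw [pow_zero, one_mul, one_mul, ← mul_assoc, h, pow_succ, mul_inv_rev, mul_assoc]⟩
    · exact ⟨a, b, m, by rw [pow_succ', ← mul_assoc, ← mul_assoc, inv_mul_cancel_left]⟩
  -- Carrying `g⁻¹` along makes the inverse case of `induction_on` trivial.
  suffices ∀ k, P k → P (g * k) ∧ P (g⁻¹ * k) by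
    simpa using (this 1 ⟨0, 0, 0, by simp⟩).1
  induction g using induction_on with
  | of g =>
    rw [← ofAdd_toAdd g, of_ofAdd, ← zpow_neg]
    exact fun k hk ↦ ⟨x_zpow_mul _ hk, x_zpow_mul _ hk⟩
  | t => exact fun k hk ↦ ⟨t_mul hk, inv_t_mul hk⟩
  | mul g h ihg ihh =>
    refine fun k hk ↦ ⟨?_, ?_⟩
    · rw [mul_assoc]; exact (ihg _ (ihh k hk).1).1
    · rw [mul_inv_rev, mul_assoc]; exact (ihh _ (ihg k hk).2).2
  | inv g ih => exact fun k hk ↦ by rw [inv_inv]; exact (ih k hk).symm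

theorem eq_one_of_commute_x_of_commute_t {g : BS12} (hx : Commute g x) (ht : Commute g t) :
    g = 1 := by
  obtain ⟨a, b, m, rfl⟩ := exists_eq_t_pow_mul_x_zpow_mul_inv g
  obtain rfl : a = b := by
    have : x ^ (m + 2 ^ b) = x ^ (2 ^ a + m) := by
      refine mul_right_cancel (b := (t ^ b)⁻¹) (mul_left_cancel (a := t ^ a) ?_)
      calc t ^ a * (x ^ (m + 2 ^ b) * (t ^ b)⁻¹)
          = t ^ a * x ^ m * (t ^ b)⁻¹ * x := by
            rw [mul_assoc _ _ x, ← zpow_one x, inv_t_pow_mul_x_zpow, zpow_one, mul_one, zpow_add]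
            simp only [mul_assoc]
        _ = x * (t ^ a * x ^ m * (t ^ b)⁻¹) := hx.eq
        _ = t ^ a * (x ^ (2 ^ a + m) * (t ^ b)⁻¹) := by
            rw [← mul_assoc, ← mul_assoc, ← zpow_one x, x_zpow_mul_t_pow, zpow_one, mul_one,
              zpow_add]
            simp only [mul_assoc]
    have := zpow_x_injective this
    exact Nat.pow_right_injective le_rfl (by exact_mod_cast (by linarith : (2 : ℤ) ^ a = 2 ^ b))
  have hm : Commute (x ^ m) t := by
    simpa [mul_assoc] using (((Commute.refl t).pow_left a).inv_left.mul_left ht).mul_left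
      ((Commute.refl t).pow_left a)
  obtain rfl : m = 0 := by
    have := zpow_x_injective (mul_left_cancel ((x_zpow_mul_t m).symm.trans hm.eq))
    omega
  simp

noncomputable def degree : BS12 →* Multiplicative ℤ := lift 1 (ofAdd 1) (by simp)

lemma degree_of (m : Multiplicative ℤ) : degree (of m) = 1 := by simp [degree]

lemma degree_x : degree x = 1 := degree_of _

lemma degree_zpowersHom_t (m : Multiplicative ℤ) : degree (zpowersHom BS12 t m) = m := by
  simp [degree, ← ofAdd_zsmul]

lemma degree_conj (c g : BS12) : degree (c⁻¹ * g * c) = degree g := by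
  rw [map_mul, map_mul, map_inv, mul_comm, mul_inv_cancel_left]

lemma zpowersHom_t_injective : Function.Injective (zpowersHom BS12 t) :=
  Function.LeftInverse.injective degree_zpowersHom_t

lemma conj_x_notMem_range_zpowersHom_t (c : BS12) :
    c⁻¹ * x * c ∉ (zpowersHom BS12 t).range := by
  rintro ⟨m, hm⟩
  have hm1 := congrArg degree hm
  rw [degree_zpowersHom_t, degree_conj, degree_x] at hm1
  rw [hm1, map_one, eq_comm, mul_assoc, inv_mul_eq_one, right_eq_mul, x, ← map_one of] at hm
  exact one_ne_zero (ofAdd.injective (of_injective halving hm))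

lemma conj_t_notMem_range_of (c : BS12) :
    c⁻¹ * t * c ∉ (of : Multiplicative ℤ →* BS12).range := by
  rintro ⟨m, hm⟩
  have := congrArg degree hm
  rw [degree_conj, degree_of, degree, lift_t] at this
  exact one_ne_zero (ofAdd.injective this.symm)

noncomputable def toBG : BS12 →* BG := lift (zpowersHom BG gx) gy fun a ↦ by
  rw [← doubling_halving a, ← ofAdd_toAdd (halving a : Multiplicative ℤ), doubling_ofAdd,
    zpowersHom_apply, zpowersHom_apply, toAdd_ofAdd, toAdd_ofAdd, zpow_mul, zpow_two]
  exact (gy_semiconjBy.zpow_right _).eq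

lemma toBG_x : toBG x = gx := by simp [toBG, x, gx]

lemma toBG_t : toBG t = gy := by simp [toBG, gy]

end BS12

namespace BGHNN

noncomputable def tToX :
    (zpowersHom BS12 t).range ≃* (of : Multiplicative ℤ →* BS12).range :=
  (MonoidHom.ofInjective BS12.zpowersHom_t_injective).symm.trans
    (MonoidHom.ofInjective (of_injective BS12.halving))

lemma tToX_apply (m : Multiplicative ℤ) :
    (tToX ⟨zpowersHom BS12 t m, m, rfl⟩ : BS12) = of m := by
  rw [tToX, MulEquiv.trans_apply, MonoidHom.ofInjective_apply]
  congr
  exact (MulEquiv.symm_apply_eq _).2 rfl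

end BGHNN

abbrev BGHNN :=
  HNNExtension BS12 (zpowersHom BS12 t).range (of : Multiplicative ℤ →* BS12).range BGHNN.tToX

namespace BGHNN

lemma t_semiconjBy : SemiconjBy (t : BGHNN) (of t) (of BS12.x) := by
  have h := t_mul_of (φ := tToX) ⟨zpowersHom BS12 t (ofAdd 1), ofAdd 1, rfl⟩
  rw [tToX_apply] at h
  simpa [SemiconjBy, BS12.x] using h

noncomputable def toBG : BGHNN →* BG := lift BS12.toBG gt fun a ↦ by
  obtain ⟨_, m, rfl⟩ := a
  rw [tToX_apply]
  simpa [BS12.toBG, gx, gy] using (gt_semiconjBy.zpow_right (toAdd m)).eq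

noncomputable def ofBG : BG →* BGHNN :=
  PresentedGroup.toGroup (f := ![of BS12.x, of t, t]) <| by
    rintro r (rfl | rfl)
    · simpa using semiconjBy_iff_inv_mul_mul_mul_inv_eq_one.1 (BS12.t_semiconjBy.map of)
    · simpa using semiconjBy_iff_inv_mul_mul_mul_inv_eq_one.1 t_semiconjBy

lemma ofBG_gx : ofBG gx = of BS12.x := PresentedGroup.toGroup.of _

lemma ofBG_gy : ofBG gy = of t := PresentedGroup.toGroup.of _

lemma ofBG_gt : ofBG gt = t := PresentedGroup.toGroup.of _

lemma toBG_ofBG (g : BG) : toBG (ofBG g) = g := by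
  suffices toBG.comp ofBG = MonoidHom.id BG from DFunLike.congr_fun this g
  refine PresentedGroup.ext fun i ↦ ?_
  fin_cases i
  · exact (congrArg toBG ofBG_gx).trans (by simp [toBG, BS12.toBG_x, gx])
  · exact (congrArg toBG ofBG_gy).trans (by simp [toBG, BS12.toBG_t, gy])
  · exact (congrArg toBG ofBG_gt).trans (by simp [toBG, gt])

end BGHNN

open BGHNN in
/-- In the Baumslag-Gersten group, the centralizer of the subgroup generated by
x and y is trivial. -/
theorem bg_centralizer_of_bs_subgroup_trivial :
    Subgroup.centralizer ((Subgroup.closure {gx, gy} : Subgroup BG) : Set BG) = ⊥ := by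
  refine (Subgroup.eq_bot_iff_forall _).2 fun g hg ↦ ?_
  have hx : Commute (ofBG g) (of BS12.x) :=
    ofBG_gx ▸ (Commute.symm (hg gx (Subgroup.subset_closure (by simp)))).map ofBG
  have ht : Commute (ofBG g) (of t) :=
    ofBG_gy ▸ (Commute.symm (hg gy (Subgroup.subset_closure (by simp)))).map ofBG
  obtain ⟨h, hh⟩ := mem_range_of_commute_of_commute BS12.conj_x_notMem_range_zpowersHom_t
    BS12.conj_t_notMem_range_of hx ht
  rw [← hh] at hx ht
  have h1 : h = 1 := BS12.eq_one_of_commute_x_of_commute_t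
    (hx.of_map (of_injective tToX)) (ht.of_map (of_injective tToX))
  rw [← toBG_ofBG g, ← hh, h1, map_one, map_one]
end
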